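/- arXiv:2006.10911 — 3 statements merged into one kernel-verified Lean document; each statement's English description precedes it below -/
import Mathlib

section
/- Let $d_1, d_2, \ldots, d_t$ be nonnegative integer delays, where the feedback generated at round $s$ arrives at round $s + d_s$. Consider the pooling strategy that maintains a pool of unused feedback: at each round the pool receives all feedback arriving at that round, and if the pool is nonempty, the single oldest item (by round of generation) is removed and used. Then the number of rounds $s \le t$ at which the pool is empty (no update occurs) is at most $\max_{1 \le s \le t} d_s$. -/
open Finset

/-- Feedback generated at round `r` (for `r ≥ 1`) arrives at round `r + d r`. -/
def arrivals (d : ℕ → ℕ) (s : ℕ) : Finset ℕ :=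
  (Finset.Icc 1 s).filter (fun r => r + d r = s)

/-- The FIFO pool: `pool d s` is the set of unused feedback after round `s`.
At each round the pool receives all feedback arriving at that round, and if the
resulting set is nonempty, the single oldest item is removed (and used). -/
def pool (d : ℕ → ℕ) : ℕ → Finset ℕ
  | 0 => ∅
  | s + 1 =>
      let S := pool d s ∪ arrivals d (s + 1)
      if h : S.Nonempty then S.erase (S.min' h) else S

lemma pool_subset (d : ℕ → ℕ) :
    ∀ s, pool d s ⊆ (Finset.Icc 1 s).filter (fun r => r + d r ≤ s)
  | 0 => by intro r hr; simp only [pool, Finset.notMem_empty] at hr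
  | s + 1 => by
    intro r hr
    rw [pool] at hr
    have hr' : r ∈ pool d s ∪ arrivals d (s + 1) := by
      split_ifs at hr with h
      · exact mem_of_mem_erase hr
      · exact hr
    rcases mem_union.1 hr' with h1 | h1
    · have := pool_subset d s h1
      simp only [mem_filter, mem_Icc] at this ⊢
      omega
    · simp only [arrivals, mem_filter, mem_Icc] at h1 ⊢
      omega

lemma pool_card (d : ℕ → ℕ) :
    ∀ s, (pool d s).card + s
      = ((Finset.Icc 1 s).filter (fun r => r + d r ≤ s)).card
        + ((Finset.Icc 1 s).filter (fun u => pool d (u - 1) ∪ arrivals d u = ∅)).card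
  | 0 => by
    have : pool d 0 = ∅ := rfl
    simp [this]
  | s + 1 => by
    have ih := pool_card d s
    have hdisj : Disjoint ((Finset.Icc 1 s).filter (fun r => r + d r ≤ s))
        (arrivals d (s + 1)) := by
      rw [disjoint_left]
      intro r h1 h2
      simp only [arrivals, mem_filter, mem_Icc] at h1 h2
      omega
    have hA : ((Finset.Icc 1 (s + 1)).filter (fun r => r + d r ≤ s + 1)).card
        = ((Finset.Icc 1 s).filter (fun r => r + d r ≤ s)).card
          + (arrivals d (s + 1)).card := by
      rw [← card_union_of_disjoint hdisj]
      congr 1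
      ext r
      simp only [arrivals, mem_filter, mem_Icc, mem_union]
      omega
    have hpd : Disjoint (pool d s) (arrivals d (s + 1)) := by
      rw [disjoint_left]
      intro r h1 h2
      have := pool_subset d s h1
      simp only [arrivals, mem_filter, mem_Icc] at this h2
      omega
    have hScard : (pool d s ∪ arrivals d (s + 1)).card
        = (pool d s).card + (arrivals d (s + 1)).card := card_union_of_disjoint hpd
    have hIcc : Finset.Icc 1 (s + 1) = insert (s + 1) (Finset.Icc 1 s) := by
      ext r; simp only [mem_Icc, mem_insert]; omega
    have hnotmem : (s + 1) ∉ Finset.Icc 1 s := by simp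
    have hE : ((Finset.Icc 1 (s + 1)).filter
          (fun u => pool d (u - 1) ∪ arrivals d u = ∅)).card
        = (if pool d s ∪ arrivals d (s + 1) = ∅ then 1 else 0)
          + ((Finset.Icc 1 s).filter (fun u => pool d (u - 1) ∪ arrivals d u = ∅)).card := by
      rw [hIcc, filter_insert]
      simp only [Nat.add_sub_cancel]
      split_ifs with h
      · rw [card_insert_of_notMem (fun hc => hnotmem (mem_filter.1 hc).1)]
        omega
      · omega
    rw [pool]
    by_cases h : (pool d s ∪ arrivals d (s + 1)).Nonempty
    · rw [dif_pos h]
      have hmin : (pool d s ∪ arrivals d (s + 1)).min' h ∈ pool d s ∪ arrivals d (s + 1) :=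
        min'_mem _ _
      rw [card_erase_of_mem hmin, hScard, hA, hE]
      have hpos : 1 ≤ (pool d s).card + (arrivals d (s + 1)).card := by
        rcases h with ⟨x, hx⟩
        rcases mem_union.1 hx with hx | hx
        · have := card_pos.2 ⟨x, hx⟩; omega
        · have := card_pos.2 ⟨x, hx⟩; omega
      have hne : ¬ (pool d s ∪ arrivals d (s + 1) = ∅) := by
        intro hc; rw [hc] at h; exact not_nonempty_empty h
      rw [if_neg hne]
      omega
    · rw [dif_neg h]
      rw [not_nonempty_iff_eq_empty] at h
      have h1 : pool d s = ∅ := by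
        have := subset_union_left (s₁ := pool d s) (s₂ := arrivals d (s + 1))
        rw [h] at this
        exact subset_empty.1 this
      have h2 : arrivals d (s + 1) = ∅ := by
        have := subset_union_right (s₁ := pool d s) (s₂ := arrivals d (s + 1))
        rw [h] at this
        exact subset_empty.1 this
      have hp0 : (pool d s).card = 0 := by rw [h1]; simp
      have ha0 : (arrivals d (s + 1)).card = 0 := by rw [h2]; simp
      rw [h, hA, hE, if_pos h]
      simp only [card_empty]
      omega

/-- The number of rounds `1 ≤ s ≤ t` at which no update occurs (the pool together
with the arriving feedback is empty) is bounded by the maximal delay `max_{1 ≤ s ≤ t} d s`. -/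
theorem pooling_empty_rounds_le_max_delay (d : ℕ → ℕ) (t : ℕ) :
    ((Finset.Icc 1 t).filter
        (fun s => pool d (s - 1) ∪ arrivals d s = ∅)).card
      ≤ (Finset.Icc 1 t).sup d := by
  set D := (Finset.Icc 1 t).sup d with hD
  set F := (Finset.Icc 1 t).filter (fun s => pool d (s - 1) ∪ arrivals d s = ∅) with hF
  by_cases hne : F.Nonempty
  swap
  · rw [not_nonempty_iff_eq_empty] at hne
    rw [hne]; simp
  set s := F.max' hne with hs
  have hsF : s ∈ F := max'_mem _ _
  have hsIcc : s ∈ Finset.Icc 1 t := (mem_filter.1 hsF).1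
  have hsP : pool d (s - 1) ∪ arrivals d s = ∅ := (mem_filter.1 hsF).2
  have hs1 : 1 ≤ s ∧ s ≤ t := by simpa [mem_Icc] using hsIcc
  -- pool d s = ∅
  have hps : pool d s = ∅ := by
    obtain ⟨s', hs'⟩ : ∃ s', s = s' + 1 := ⟨s - 1, by omega⟩
    rw [hs'] at hsP ⊢
    have h1 : s' + 1 - 1 = s' := by omega
    rw [h1] at hsP
    rw [pool]
    rw [dif_neg (by rw [hsP]; exact not_nonempty_empty), hsP]
  -- F ⊆ filter over Icc 1 s
  have hFsub : F ⊆ (Finset.Icc 1 s).filter (fun u => pool d (u - 1) ∪ arrivals d u = ∅) := by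
    intro u hu
    have h1 := (mem_filter.1 hu).1
    have h2 := (mem_filter.1 hu).2
    have hle : u ≤ s := le_max' _ _ hu
    simp only [mem_filter, mem_Icc] at h1 ⊢
    exact ⟨⟨h1.1, hle⟩, h2⟩
  have hkey := pool_card d s
  rw [hps, card_empty] at hkey
  -- A s ≥ s - D
  have hAge : s ≤ ((Finset.Icc 1 s).filter (fun r => r + d r ≤ s)).card + D := by
    have hsub : (Finset.Icc 1 s).filter (fun r => r + D ≤ s)
        ⊆ (Finset.Icc 1 s).filter (fun r => r + d r ≤ s) := by
      intro r hr
      simp only [mem_filter, mem_Icc] at hr ⊢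
      have hdr : d r ≤ D := Finset.le_sup (by simp [mem_Icc]; omega)
      omega
    have hcard : ((Finset.Icc 1 s).filter (fun r => r + D ≤ s)).card = s - D := by
      have : (Finset.Icc 1 s).filter (fun r => r + D ≤ s) = Finset.Icc 1 (s - D) := by
        ext r; simp only [mem_filter, mem_Icc]; omega
      rw [this, Nat.card_Icc]; omega
    have := card_le_card hsub
    omega
  have hcardle := card_le_card hFsub
  omega
end

section
/- Under the FIFO pooling strategy with delays $d_s$, the time lag between the round $t$ at which a piece of feedback is dequeued and used, and the round $h_t$ at which that feedback was generated, satisfies $t - h_t \le \max_{1 \le s \le t} d_s$ for all rounds $t$ at which the pool is nonempty. -/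
open Finset

lemma pool_mem_aux (d : ℕ → ℕ) : ∀ s, ∀ q ∈ pool d s, 1 ≤ q ∧ q + d q ≤ s := by
  intro s
  induction s with
  | zero => intro q hq; simp [pool] at hq
  | succ n ih =>
    intro q hq
    have hS : q ∈ pool d n ∪ arrivals d (n + 1) := by
      simp only [pool] at hq
      split_ifs at hq with h
      · exact Finset.mem_of_mem_erase hq
      · exact hq
    rcases Finset.mem_union.1 hS with h | h
    · obtain ⟨h1, h2⟩ := ih q h
      exact ⟨h1, h2.trans (Nat.le_succ n)⟩
    · simp only [arrivals, Finset.mem_filter, Finset.mem_Icc] at h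
      exact ⟨h.1.1, le_of_eq h.2⟩

lemma pool_lag_aux (d : ℕ → ℕ) : ∀ t, ∀ hne : (pool d t ∪ arrivals d (t + 1)).Nonempty,
    (t + 1) - (pool d t ∪ arrivals d (t + 1)).min' hne ≤ (Finset.Icc 1 (t + 1)).sup d := by
  intro t
  induction t with
  | zero =>
    intro hne
    set S := pool d 0 ∪ arrivals d 1 with hSdef
    set r := S.min' hne with hrdef
    have hrS : r ∈ S := Finset.min'_mem _ _
    have : r ∈ arrivals d 1 := by
      rcases Finset.mem_union.1 hrS with h | h
      · simp [pool] at h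
      · exact h
    simp only [arrivals, Finset.mem_filter, Finset.mem_Icc] at this
    omega
  | succ n ih =>
    intro hne
    set S := pool d (n + 1) ∪ arrivals d (n + 2) with hSdef
    set r := S.min' hne with hrdef
    have hrS : r ∈ S := Finset.min'_mem _ _
    rcases Finset.mem_union.1 hrS with hpool | harr
    · simp only [pool] at hpool
      set S' := pool d n ∪ arrivals d (n + 1) with hS'def
      have hS'ne : S'.Nonempty := by
        by_contra h
        rw [dif_neg h] at hpool
        exact h ⟨r, hpool⟩
      rw [dif_pos hS'ne] at hpool
      set m := S'.min' hS'ne with hmdef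
      have hrm : r ≠ m := Finset.ne_of_mem_erase hpool
      have hrS' : r ∈ S' := Finset.mem_of_mem_erase hpool
      have hmr : m < r := lt_of_le_of_ne (Finset.min'_le _ _ hrS') (Ne.symm hrm)
      have hIH : (n + 1) - m ≤ (Finset.Icc 1 (n + 1)).sup d := ih hS'ne
      have hmono : (Finset.Icc 1 (n + 1)).sup d ≤ (Finset.Icc 1 (n + 2)).sup d :=
        Finset.sup_mono (Finset.Icc_subset_Icc_right (by omega))
      clear_value m S' r S
      show n + 2 - r ≤ (Finset.Icc 1 (n + 2)).sup d
      omega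
    · simp only [arrivals, Finset.mem_filter, Finset.mem_Icc] at harr
      have hds : d r ≤ (Finset.Icc 1 (n + 2)).sup d :=
        Finset.le_sup (Finset.mem_Icc.2 ⟨harr.1.1, harr.1.2⟩)
      clear_value r S
      show n + 2 - r ≤ (Finset.Icc 1 (n + 2)).sup d
      omega

/-- If the pool (including arrivals) is nonempty at round `t ≥ 1`, the item dequeued
at round `t` originates from round `h_t = min (P_{t-1} ∪ I_t)`, and the time lag
satisfies `t - h_t ≤ max_{1 ≤ s ≤ t} d s`. -/
theorem pooling_lag_le_max_delay (d : ℕ → ℕ) (t : ℕ) (ht : 1 ≤ t)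
    (hne : (pool d (t - 1) ∪ arrivals d t).Nonempty) :
    t - (pool d (t - 1) ∪ arrivals d t).min' hne ≤ (Finset.Icc 1 t).sup d := by
  obtain ⟨u, rfl⟩ : ∃ u, t = u + 1 := ⟨t - 1, by omega⟩
  simpa using pool_lag_aux d u (by simpa using hne)
end

section
/- Consider the Kelly auction game with $N$ players, action sets $\mathcal{X}^i = [0, b^i]$ with $b^i > 0$, entry barrier $c > 0$, gains $g^i > 0$, and payoffs $u^i(x) = g^i \frac{x^i}{c + \sum_{j} x^j} - x^i$. Then the game is diagonally strictly concave (monotone): there exist weights $\lambda^i > 0$ (indeed $\lambda^i = 1/g^i$ works) such that $\sum_i \lambda^i \langle \nabla_{x^i} u^i(y) - \nabla_{x^i} u^i(x), y^i - x^i \rangle < 0$ for all distinct $x, y \in \prod_i \mathcal{X}^i$. -/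
open Finset

lemma kelly_deriv_aux (g A t : ℝ) (h : A + t ≠ 0) :
    deriv (fun s : ℝ => g * s / (A + s) - s) t = g * A / (A + t) ^ 2 - 1 := by
  have h1 : HasDerivAt (fun s : ℝ => g * s) g t := by
    simpa using (hasDerivAt_id t).const_mul g
  have h2 : HasDerivAt (fun s : ℝ => A + s) 1 t := by
    simpa using (hasDerivAt_id t).const_add A
  have h3 := (h1.div h2 h).sub (hasDerivAt_id t)
  have h4 : (g * (A + t) - g * t * 1) / (A + t) ^ 2 - 1 = g * A / (A + t) ^ 2 - 1 := by
    congr 1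
    congr 1
    ring
  rw [← h4]
  exact h3.deriv

lemma kelly_deriv_update {N : ℕ} (gi c : ℝ) (hc : 0 < c) (x : Fin N → ℝ)
    (hx : ∀ j, 0 ≤ x j) (i : Fin N) :
    deriv (fun s : ℝ => gi * s / (c + ∑ j, Function.update x i s j) - s) (x i)
      = gi * ((c + ∑ j, x j) - x i) / (c + ∑ j, x j) ^ 2 - 1 := by
  have hA : ∀ s : ℝ, (∑ j, Function.update x i s j) = s + ∑ j ∈ univ \ {i}, x j :=
    fun s => Finset.sum_update_of_mem (f := x) (mem_univ i) s
  have hsum : (∑ j ∈ univ \ {i}, x j) + x i = ∑ j, x j := by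
    rw [Finset.sdiff_singleton_eq_erase]
    exact Finset.sum_erase_add _ _ (mem_univ i)
  have hfun : (fun s : ℝ => gi * s / (c + ∑ j, Function.update x i s j) - s)
      = fun s : ℝ => gi * s / ((c + ∑ j ∈ univ \ {i}, x j) + s) - s := by
    funext s
    rw [hA s]
    ring_nf
  have hAnn : 0 ≤ ∑ j ∈ univ \ {i}, x j := sum_nonneg fun j _ => hx j
  have hne : (c + ∑ j ∈ univ \ {i}, x j) + x i ≠ 0 := by
    have := hx i; positivity
  rw [hfun, kelly_deriv_aux _ _ _ hne]
  have h1 : (c + ∑ j ∈ univ \ {i}, x j) + x i = c + ∑ j, x j := by linarith [hsum]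
  have h2 : c + ∑ j ∈ univ \ {i}, x j = (c + ∑ j, x j) - x i := by linarith [hsum]
  rw [h1, h2]

lemma kelly_num_neg (N : ℕ) (x y : Fin N → ℝ) (P Q : ℝ) (hP : 0 < P) (hQ : 0 < Q)
    (hx : ∀ i, 0 ≤ x i) (hy : ∀ i, 0 ≤ y i)
    (hPx : ∑ i, x i < P) (hQy : ∑ i, y i < Q)
    (hPQ : Q - P = ∑ i, y i - ∑ i, x i)
    (hxy : x ≠ y) :
    -(P*Q*(Q-P)^2) - P^2*(∑ i, y i ^2) - Q^2*(∑ i, x i ^2)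
      + (P^2+Q^2)*(∑ i, x i * y i) < 0 := by
  set A2 := ∑ i, x i ^ 2 with hA2
  set B2 := ∑ i, y i ^ 2 with hB2
  set C := ∑ i, x i * y i with hC
  have hA2n : 0 ≤ A2 := sum_nonneg fun i _ => sq_nonneg _
  have hB2n : 0 ≤ B2 := sum_nonneg fun i _ => sq_nonneg _
  have hCn : 0 ≤ C := sum_nonneg fun i _ => mul_nonneg (hx i) (hy i)
  have hCS : C ^ 2 ≤ A2 * B2 := Finset.sum_mul_sq_le_sq_mul_sq univ x y
  have hA2P : A2 < P ^ 2 := by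
    have h1 : A2 ≤ (∑ i, x i) ^ 2 := Finset.sum_sq_le_sq_sum_of_nonneg fun i _ => hx i
    have h2 : (∑ i, x i) ^ 2 < P ^ 2 := by
      have := sum_nonneg (fun i (_ : i ∈ univ) => hx i)
      nlinarith
    linarith
  have hB2Q : B2 < Q ^ 2 := by
    have h1 : B2 ≤ (∑ i, y i) ^ 2 := Finset.sum_sq_le_sq_sum_of_nonneg fun i _ => hy i
    have h2 : (∑ i, y i) ^ 2 < Q ^ 2 := by
      have := sum_nonneg (fun i (_ : i ∈ univ) => hy i)
      nlinarith
    linarith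
  rcases eq_or_ne P Q with h | h
  · subst h
    have hd : ∑ i, (x i - y i) ^ 2 = A2 + B2 - 2 * C := by
      rw [hA2, hB2, hC, Finset.mul_sum, ← Finset.sum_add_distrib, ← Finset.sum_sub_distrib]
      exact sum_congr rfl fun i _ => by ring
    have hpos : 0 < ∑ i, (x i - y i) ^ 2 := by
      obtain ⟨i, hi⟩ := Function.ne_iff.mp hxy
      have h0 : x i - y i ≠ 0 := sub_ne_zero.mpr hi
      exact Finset.sum_pos' (fun j _ => sq_nonneg _)
        ⟨i, mem_univ i, (sq_nonneg _).lt_of_ne' (pow_ne_zero 2 h0)⟩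
    nlinarith
  · -- P ≠ Q
    have hu : 0 ≤ P ^ 2 * B2 := by positivity
    have hv : 0 ≤ Q ^ 2 * A2 := by positivity
    have hw : 0 ≤ P * Q * C := by positivity
    have huv : (P * Q * C) ^ 2 ≤ (P ^ 2 * B2) * (Q ^ 2 * A2) := by
      have h5 := mul_le_mul_of_nonneg_left hCS (by positivity : (0:ℝ) ≤ P ^ 2 * Q ^ 2)
      nlinarith [h5]
    have hkey : (2 * (P * Q * C)) ^ 2 ≤ (P ^ 2 * B2 + Q ^ 2 * A2) ^ 2 := by
      nlinarith [sq_nonneg (P ^ 2 * B2 - Q ^ 2 * A2), huv]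
    have h1 : 2 * (P * Q) * C ≤ P ^ 2 * B2 + Q ^ 2 * A2 := by
      nlinarith [hkey, hu, hv, hw]
    have h2 : C < P * Q := by
      nlinarith [hCS, hCn, mul_pos hP hQ,
        mul_lt_mul_of_pos_right hA2P (by positivity : (0:ℝ) < Q ^ 2),
        mul_le_mul_of_nonneg_left hB2Q.le hA2n]
    have h3 : 0 < (P - Q) ^ 2 := by
      have : P - Q ≠ 0 := sub_ne_zero.mpr h
      exact (sq_nonneg _).lt_of_ne' (pow_ne_zero 2 this)
    have hre : -(P*Q*(Q-P)^2) - P^2*B2 - Q^2*A2 + (P^2+Q^2)*C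
        = -((P-Q)^2*(P*Q - C)) - (P^2*B2 + Q^2*A2 - 2*(P*Q)*C) := by ring
    rw [hre]
    have := mul_pos h3 (sub_pos.mpr h2)
    linarith

/-- The Kelly auction game with `N` players, action sets `[0, bᵢ]`, entry barrier
`c > 0`, gains `gᵢ > 0` and payoffs `uⁱ(x) = gⁱ xⁱ/(c + ∑ⱼ xʲ) - xⁱ` is diagonally
strictly concave (monotone): there exist weights `λᵢ > 0` (indeed `λᵢ = 1/gᵢ` works)
such that `∑ᵢ λᵢ (vⁱ(y) - vⁱ(x)) (yᵢ - xᵢ) < 0` for all distinct feasible `x, y`,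
where `vⁱ(x)` is the partial derivative of `uⁱ` in its own variable `xⁱ`. -/
theorem kelly_auction_diagonally_strictly_concave
    (N : ℕ) (hN : 0 < N) (b g : Fin N → ℝ) (c : ℝ)
    (hb : ∀ i, 0 < b i) (hg : ∀ i, 0 < g i) (hc : 0 < c) :
    ∃ lam : Fin N → ℝ, (∀ i, 0 < lam i) ∧ (∀ i, lam i = 1 / g i) ∧
      ∀ x y : Fin N → ℝ,
        (∀ i, x i ∈ Set.Icc (0 : ℝ) (b i)) → (∀ i, y i ∈ Set.Icc (0 : ℝ) (b i)) →
        x ≠ y →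
        ∑ i, lam i *
            ((deriv (fun s : ℝ =>
                g i * s / (c + ∑ j, Function.update y i s j) - s) (y i)) -
             (deriv (fun s : ℝ =>
                g i * s / (c + ∑ j, Function.update x i s j) - s) (x i))) *
            (y i - x i) < 0 := by
  refine ⟨fun i => 1 / g i, fun i => by have := hg i; positivity, fun i => rfl, ?_⟩
  intro x y hx hy hxy
  have hx0 : ∀ i, 0 ≤ x i := fun i => (hx i).1
  have hy0 : ∀ i, 0 ≤ y i := fun i => (hy i).1
  have hSx : 0 ≤ ∑ i, x i := sum_nonneg fun i _ => hx0 i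
  have hSy : 0 ≤ ∑ i, y i := sum_nonneg fun i _ => hy0 i
  set P : ℝ := c + ∑ i, x i with hPdef
  set Q : ℝ := c + ∑ i, y i with hQdef
  have hP : 0 < P := by rw [hPdef]; linarith
  have hQ : 0 < Q := by rw [hQdef]; linarith
  have step1 : ∑ i, (1 / g i) *
      ((deriv (fun s : ℝ => g i * s / (c + ∑ j, Function.update y i s j) - s) (y i)) -
       (deriv (fun s : ℝ => g i * s / (c + ∑ j, Function.update x i s j) - s) (x i))) *
      (y i - x i)
      = ∑ i, ((Q*P^2 - P*Q^2)*(y i - x i) + (P^2+Q^2)*(x i * y i)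
              - P^2*(y i)^2 - Q^2*(x i)^2) / (P^2*Q^2) := by
    refine sum_congr rfl fun i _ => ?_
    rw [kelly_deriv_update (g i) c hc y hy0 i, kelly_deriv_update (g i) c hc x hx0 i]
    rw [← hPdef, ← hQdef]
    have hgne : g i ≠ 0 := (hg i).ne'
    have hPne : P ≠ 0 := hP.ne'
    have hQne : Q ≠ 0 := hQ.ne'
    field_simp
    ring
  rw [step1, ← Finset.sum_div]
  apply div_neg_of_neg_of_pos
  · have hnum : ∑ i, ((Q*P^2 - P*Q^2)*(y i - x i) + (P^2+Q^2)*(x i * y i)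
        - P^2*(y i)^2 - Q^2*(x i)^2)
        = (Q*P^2 - P*Q^2)*((∑ i, y i) - (∑ i, x i)) + (P^2+Q^2)*(∑ i, x i * y i)
          - P^2*(∑ i, (y i)^2) - Q^2*(∑ i, (x i)^2) := by
      simp only [Finset.sum_sub_distrib, Finset.sum_add_distrib, ← Finset.mul_sum,
        mul_sub]
    rw [hnum]
    have hPQ : Q - P = ∑ i, y i - ∑ i, x i := by rw [hPdef, hQdef]; ring
    have hfirst : (Q*P^2 - P*Q^2)*((∑ i, y i) - (∑ i, x i)) = -(P*Q*(Q-P)^2) := by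
      rw [← hPQ]; ring
    rw [hfirst]
    have hPx : ∑ i, x i < P := by rw [hPdef]; linarith
    have hQy : ∑ i, y i < Q := by rw [hQdef]; linarith
    have := kelly_num_neg N x y P Q hP hQ hx0 hy0 hPx hQy hPQ hxy
    linarith
  · positivity
end
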